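/- Let 0 < α < 1/2 and let a = (a_k) be nondecreasing and bounded with limit a_∞, lying in X^s for s > 1. Then for every k ≥ 1, (ℒ^α a)_∞ − (ℒ^α a)_k ≤ C(α) (a_∞ − a_k) 2^{2αk} + Σ_{n=k}^∞ (a_∞ − a_n) 2^{2αn}, where (ℒ^α a)_∞ = Σ_{n=0}^∞ (a_∞ − a_n) 2^{2αn} and C(α) depends only on α. In particular, if additionally a_∞ − a_n ≤ C₁ 2^{−n/2} for all n (Hölder-1/2 bound) and 2α < 1/2, then (ℒ^α a)_∞ − (ℒ^α a)_k ≤ C(α)(a_∞ − a_k) 2^{2αk} + C' 2^{(2α − 1/2)k}. -/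

import Mathlib

/-!
The difference `(ℒa)_∞ − (ℒa)_k` splits into three pieces. The head
`Σ_{n<k} (a_∞ − a_k) 2^{2αn}` is a geometric sum, at most `(2^{2α} − 1)⁻¹ (a_∞ − a_k) 2^{2αk}`.
The tail `Σ_{n≥k} (a_∞ − a_n) 2^{2αn}` is kept as it is. What remains is the forward part of
`(ℒa)_k` with its sign flipped: by monotonicity its increments `a_n − a_k` lie in `[0, a_∞ − a_k]`,
and its weights `2^{2αk} 2^{k−n}` add up to `2^{2αk}`. Under the Hölder bound the tail is
dominated by a geometric series of ratio `2^{2α−1/2} < 1`.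
-/

/-- The discrete dissipation operator `(ℒ^α a)_k`. -/
noncomputable def Ldiss (α : ℝ) (a : ℕ → ℝ) (k : ℕ) : ℝ :=
  (∑ n ∈ Finset.range k, (a k - a n) * (2:ℝ) ^ (2 * α * (n:ℝ))) +
  ∑' n : ℕ, (a k - a (k + 1 + n)) * (2:ℝ) ^ (2 * α * (k:ℝ)) * (2:ℝ) ^ (-(1:ℝ) - (n:ℝ))

open Finset

lemma geom_sum_le_pow_div_sub_one {r : ℝ} (hr : 1 < r) (k : ℕ) :
    ∑ n ∈ range k, r ^ n ≤ r ^ k / (r - 1) := by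
  rw [geom_sum_eq hr.ne']
  gcongr
  linarith

lemma sum_range_two_rpow_mul_le {β : ℝ} (hβ : 0 < β) (k : ℕ) :
    ∑ n ∈ range k, (2:ℝ) ^ (β * n) ≤ ((2:ℝ) ^ β - 1)⁻¹ * (2:ℝ) ^ (β * k) := by
  simp_rw [Real.rpow_mul_natCast zero_le_two, inv_mul_eq_div]
  exact geom_sum_le_pow_div_sub_one (Real.one_lt_rpow one_lt_two hβ) k

lemma hasSum_two_rpow_neg_one_sub : HasSum (fun n : ℕ => (2:ℝ) ^ (-(1:ℝ) - n)) 1 := by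
  convert hasSum_geometric_two' 1 using 2 with n
  rw [sub_eq_add_neg, Real.rpow_add two_pos, Real.rpow_neg_one, Real.rpow_neg zero_le_two,
    Real.rpow_natCast]
  ring

lemma tsum_mul_two_rpow_neg_one_sub_le {b : ℕ → ℝ} {B : ℝ} (h0 : ∀ n, 0 ≤ b n)
    (hB : ∀ n, b n ≤ B) : ∑' n : ℕ, b n * (2:ℝ) ^ (-(1:ℝ) - n) ≤ B := by
  have hmajorant : HasSum (fun n : ℕ => B * (2:ℝ) ^ (-(1:ℝ) - n)) B := by
    simpa using hasSum_two_rpow_neg_one_sub.mul_left B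
  have hle : ∀ n : ℕ, b n * (2:ℝ) ^ (-(1:ℝ) - n) ≤ B * (2:ℝ) ^ (-(1:ℝ) - n) :=
    fun n => by gcongr; exact hB n
  have hsum := hmajorant.summable.of_nonneg_of_le (fun n => by have := h0 n; positivity) hle
  exact (hsum.tsum_le_tsum hle hmajorant.summable).trans_eq hmajorant.tsum_eq

lemma neg_tsum_Ldiss_tail_le {a : ℕ → ℝ} {aInf c : ℝ} (ha : Monotone a)
    (hle : ∀ n, a n ≤ aInf) (hc : 0 ≤ c) (k : ℕ) :
    -∑' n : ℕ, (a k - a (k + 1 + n)) * c * (2:ℝ) ^ (-(1:ℝ) - n) ≤ (aInf - a k) * c := by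
  rw [← tsum_neg]
  simp_rw [← neg_mul, neg_sub]
  refine tsum_mul_two_rpow_neg_one_sub_le (fun n => ?_) (fun n => ?_)
  · exact mul_nonneg (sub_nonneg.2 (ha (by omega))) hc
  · gcongr
    exact hle _

lemma shift_two_rpow_weight (d : ℕ → ℝ) (β : ℝ) (k : ℕ) :
    (fun n : ℕ => d (k + n) * (2:ℝ) ^ (β * ((k:ℝ) + n)))
      = fun n => (fun m : ℕ => d m * (2:ℝ) ^ (β * m)) (n + k) := by
  funext n
  rw [add_comm k n]
  push_cast
  ring_nf

theorem tsum_sub_Ldiss_le {α : ℝ} (hα : 0 < α) {a : ℕ → ℝ} {aInf : ℝ} (ha : Monotone a)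
    (hle : ∀ n, a n ≤ aInf)
    (hsum : Summable fun n : ℕ => (aInf - a n) * (2:ℝ) ^ (2 * α * (n:ℝ))) (k : ℕ) :
    (∑' n : ℕ, (aInf - a n) * (2:ℝ) ^ (2 * α * (n:ℝ))) - Ldiss α a k
      ≤ (1 + ((2:ℝ) ^ (2 * α) - 1)⁻¹) * (aInf - a k) * (2:ℝ) ^ (2 * α * (k:ℝ))
        + ∑' n : ℕ, (aInf - a (k + n)) * (2:ℝ) ^ (2 * α * ((k:ℝ) + (n:ℝ))) := by
  have hsplit := hsum.sum_add_tsum_nat_add k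
  rw [← shift_two_rpow_weight (fun n => aInf - a n)] at hsplit
  have hhead : ∑ n ∈ range k, (aInf - a n) * (2:ℝ) ^ (2 * α * (n:ℝ))
      - ∑ n ∈ range k, (a k - a n) * (2:ℝ) ^ (2 * α * (n:ℝ))
      = (aInf - a k) * ∑ n ∈ range k, (2:ℝ) ^ (2 * α * (n:ℝ)) := by
    rw [mul_sum, ← sum_sub_distrib]
    exact sum_congr rfl fun n _ => by ring
  have hgeom := mul_le_mul_of_nonneg_left (sum_range_two_rpow_mul_le (β := 2 * α) (by positivity) k)
    (sub_nonneg.2 (hle k))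
  have htail := neg_tsum_Ldiss_tail_le ha hle (by positivity : (0:ℝ) ≤ 2 ^ (2 * α * (k:ℝ))) k
  unfold Ldiss
  linarith

lemma tsum_shift_le_of_le_two_rpow_neg_half {α C₁ : ℝ} (hα : α < 1/4) {d : ℕ → ℝ}
    (hd : ∀ n, d n ≤ C₁ * (2:ℝ) ^ (-(n:ℝ)/2)) (k : ℕ)
    (hsum : Summable fun n : ℕ => d (k + n) * (2:ℝ) ^ (2 * α * ((k:ℝ) + n))) :
    ∑' n : ℕ, d (k + n) * (2:ℝ) ^ (2 * α * ((k:ℝ) + n))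
      ≤ C₁ / (1 - (2:ℝ) ^ (2 * α - 1/2)) * (2:ℝ) ^ ((2 * α - 1/2) * k) := by
  set q := (2:ℝ) ^ (2 * α - 1/2)
  have hq1 : q < 1 := Real.rpow_lt_one_of_one_lt_of_neg one_lt_two (by linarith)
  have hq0 : 0 ≤ q := by positivity
  have hterm : ∀ n : ℕ, d (k + n) * (2:ℝ) ^ (2 * α * ((k:ℝ) + n))
      ≤ C₁ * (2:ℝ) ^ ((2 * α - 1/2) * k) * q ^ n := fun n => calc
    _ ≤ C₁ * (2:ℝ) ^ (-((k + n : ℕ):ℝ)/2) * (2:ℝ) ^ (2 * α * ((k:ℝ) + n)) := by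
        gcongr
        exact hd _
    _ = C₁ * ((2:ℝ) ^ ((2 * α - 1/2) * k) * (2:ℝ) ^ ((2 * α - 1/2) * n)) := by
        rw [mul_assoc, ← Real.rpow_add two_pos, ← Real.rpow_add two_pos]
        push_cast
        ring_nf
    _ = C₁ * (2:ℝ) ^ ((2 * α - 1/2) * k) * q ^ n := by
        rw [Real.rpow_mul_natCast zero_le_two (2 * α - 1/2) n, mul_assoc]
  have hgeom := (hasSum_geometric_of_lt_one hq0 hq1).mul_left (C₁ * (2:ℝ) ^ ((2 * α - 1/2) * k))
  calc _ ≤ C₁ * (2:ℝ) ^ ((2 * α - 1/2) * k) * (1 - q)⁻¹ := hasSum_le hterm hsum.hasSum hgeom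
    _ = _ := by ring

theorem stmt14_general (α : ℝ) (hα0 : 0 < α) :
    ∃ Cα : ℝ, 0 < Cα ∧
      ∀ (a : ℕ → ℝ) (aInf : ℝ), Monotone a →
        Filter.Tendsto a Filter.atTop (nhds aInf) →
        (∃ s : ℝ, 1 < s ∧ ∃ C₂ : ℝ, ∀ k : ℕ,
          |a (k+1) - a k| * (2:ℝ) ^ (s * ((k:ℝ)+1)) ≤ C₂) →
        Summable (fun n : ℕ => (aInf - a n) * (2:ℝ) ^ (2 * α * (n:ℝ))) →
        (∀ k : ℕ, 1 ≤ k →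
          (∑' n : ℕ, (aInf - a n) * (2:ℝ) ^ (2 * α * (n:ℝ))) - Ldiss α a k
            ≤ Cα * (aInf - a k) * (2:ℝ) ^ (2 * α * (k:ℝ))
              + ∑' n : ℕ, (aInf - a (k + n)) * (2:ℝ) ^ (2 * α * ((k:ℝ) + (n:ℝ)))) ∧
        (∀ C₁ : ℝ, 0 ≤ C₁ →
          (∀ n : ℕ, aInf - a n ≤ C₁ * (2:ℝ) ^ (-(n:ℝ)/2)) → α < 1/4 →
          ∃ C' : ℝ, 0 < C' ∧ ∀ k : ℕ, 1 ≤ k →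
            (∑' n : ℕ, (aInf - a n) * (2:ℝ) ^ (2 * α * (n:ℝ))) - Ldiss α a k
              ≤ Cα * (aInf - a k) * (2:ℝ) ^ (2 * α * (k:ℝ))
                + C' * (2:ℝ) ^ ((2 * α - 1/2) * (k:ℝ))) := by
  have hr : 1 < (2:ℝ) ^ (2 * α) := Real.one_lt_rpow one_lt_two (by positivity)
  refine ⟨1 + ((2:ℝ) ^ (2 * α) - 1)⁻¹, by have := inv_pos.2 (sub_pos.2 hr); linarith, ?_⟩
  intro a aInf ha hlim _ hsum
  have hkey := tsum_sub_Ldiss_le hα0 ha (ha.ge_of_tendsto hlim) hsum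
  refine ⟨fun k _ => hkey k, fun C₁ hC₁ hd hα4 => ?_⟩
  have hq : 0 < 1 - (2:ℝ) ^ (2 * α - 1/2) :=
    sub_pos.2 (Real.rpow_lt_one_of_one_lt_of_neg one_lt_two (by linarith))
  refine ⟨(C₁ + 1) / (1 - (2:ℝ) ^ (2 * α - 1/2)), by positivity, fun k _ => ?_⟩
  have htail := tsum_shift_le_of_le_two_rpow_neg_half hα4 hd k
    (by rw [shift_two_rpow_weight (fun n => aInf - a n)]; exact (summable_nat_add_iff k).2 hsum)
  have hC' : C₁ / (1 - (2:ℝ) ^ (2 * α - 1/2)) * (2:ℝ) ^ ((2 * α - 1/2) * k)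
      ≤ (C₁ + 1) / (1 - (2:ℝ) ^ (2 * α - 1/2)) * (2:ℝ) ^ ((2 * α - 1/2) * k) := by
    gcongr
    linarith
  linarith [hkey k]

/-- Estimate for `(ℒa)_∞ − (ℒa)_k`, where `(ℒa)_∞ = Σ (a_∞ − a_n)2^{2αn}`. -/
theorem stmt14 (α : ℝ) (hα0 : 0 < α) (hα1 : α < 1/2) :
    ∃ Cα : ℝ, 0 < Cα ∧
      ∀ (a : ℕ → ℝ) (aInf : ℝ), Monotone a →
        Filter.Tendsto a Filter.atTop (nhds aInf) →
        (∃ s : ℝ, 1 < s ∧ ∃ C₂ : ℝ, ∀ k : ℕ,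
          |a (k+1) - a k| * (2:ℝ) ^ (s * ((k:ℝ)+1)) ≤ C₂) →
        Summable (fun n : ℕ => (aInf - a n) * (2:ℝ) ^ (2 * α * (n:ℝ))) →
        (∀ k : ℕ, 1 ≤ k →
          (∑' n : ℕ, (aInf - a n) * (2:ℝ) ^ (2 * α * (n:ℝ))) - Ldiss α a k
            ≤ Cα * (aInf - a k) * (2:ℝ) ^ (2 * α * (k:ℝ))
              + ∑' n : ℕ, (aInf - a (k + n)) * (2:ℝ) ^ (2 * α * ((k:ℝ) + (n:ℝ)))) ∧
        (∀ C₁ : ℝ, 0 ≤ C₁ →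
          (∀ n : ℕ, aInf - a n ≤ C₁ * (2:ℝ) ^ (-(n:ℝ)/2)) → α < 1/4 →
          ∃ C' : ℝ, 0 < C' ∧ ∀ k : ℕ, 1 ≤ k →
            (∑' n : ℕ, (aInf - a n) * (2:ℝ) ^ (2 * α * (n:ℝ))) - Ldiss α a k
              ≤ Cα * (aInf - a k) * (2:ℝ) ^ (2 * α * (k:ℝ))
                + C' * (2:ℝ) ^ ((2 * α - 1/2) * (k:ℝ))) :=
  stmt14_general α hα0
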